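/- arXiv:solv-int/9704004 — 2 statements merged into one kernel-verified Lean document; each statement's English description precedes it below -/
import Mathlib

section
/- Let r ≥ 1, N ≥ 2, let c_1,…,c_N be pairwise distinct complex constants, and let A_1,…,A_N : U → M_r(ℂ) be holomorphic on a connected open set U ⊆ ℂ^N. Then the following are equivalent: (i) for every i, every t ∈ U and every λ ∈ ℂ \ {c_1,…,c_N}, the Lax equation ∂M(λ,t)/∂t_i = [M(λ,t), A_i(t)/(λ − c_i)] holds; (ii) the functions A_1,…,A_N satisfy Garnier's autonomous system on U. -/
open Matrix Finset

attribute [local instance] Matrix.normedAddCommGroup Matrix.normedSpace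

/-!
Write `M(λ) = ∑ₖ Aₖ/(λ - cₖ)`. By the partial fraction identity
`1/((λ - cₖ)(λ - cᵢ)) = (1/(cₖ - cᵢ)) (1/(λ - cₖ) - 1/(λ - cᵢ))`, the commutator
`[M(λ), Aᵢ/(λ - cᵢ)]` is again a sum `∑ₖ Gᵢₖ/(λ - cₖ)` whose residues `Gᵢₖ` are exactly the
right-hand sides of Garnier's system for `∂Aₖ/∂tᵢ`. Since `∂M/∂tᵢ = ∑ₖ (∂Aₖ/∂tᵢ)/(λ - cₖ)`,
the Lax equation compares two such sums, and the residues of a sum of simple poles at distinct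
points are determined by its values away from the poles.
-/

section PartialFractions

variable {𝕜 ι : Type*} [Field 𝕜] [Fintype ι] [DecidableEq ι] {c : ι → 𝕜}

theorem inv_sub_mul_inv_sub {a b z : 𝕜} (hab : a ≠ b) (ha : z ≠ a) (hb : z ≠ b) :
    (z - a)⁻¹ * (z - b)⁻¹ = (a - b)⁻¹ * ((z - a)⁻¹ - (z - b)⁻¹) := by
  have := sub_ne_zero.2 hab
  have := sub_ne_zero.2 ha
  have := sub_ne_zero.2 hb
  field_simp
  ring

/-- Clearing denominators turns the sum into a polynomial of degree `< card ι` that vanishes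
at infinitely many points; its value at `c j` is `b j` times a nonzero product. -/
theorem eq_zero_of_sum_inv_sub_mul_eq_zero [Infinite 𝕜] (hc : Function.Injective c) {b : ι → 𝕜}
    (h : ∀ z, (∀ k, z ≠ c k) → ∑ k, (z - c k)⁻¹ * b k = 0) (j : ι) : b j = 0 := by
  open Polynomial in
  set p : 𝕜[X] := ∑ k, C (b k) * ∏ l ∈ univ.erase k, (X - C (c l))
  have hp_eval (z : 𝕜) : p.eval z = ∑ k, b k * ∏ l ∈ univ.erase k, (z - c l) := by
    simp [p, eval_finsetSum, eval_prod]
  have hp_root (z : 𝕜) (hz : ∀ k, z ≠ c k) : p.IsRoot z := by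
    have hz' (k : ι) : z - c k ≠ 0 := sub_ne_zero.2 (hz k)
    rw [IsRoot, hp_eval, ← mul_zero (∏ l, (z - c l)), ← h z hz, mul_sum]
    refine sum_congr rfl fun k _ => ?_
    rw [← mul_prod_erase _ _ (mem_univ k)]
    field_simp [hz' k]
  have hp : p = 0 := by
    refine eq_zero_of_infinite_isRoot p ((Set.finite_range c).infinite_compl.mono ?_)
    intro z hz
    exact hp_root z fun k hk => hz ⟨k, hk.symm⟩
  have hcj := hp_eval (c j)
  rw [hp, eval_zero, sum_eq_single j, eq_comm, mul_eq_zero] at hcj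
  · refine hcj.resolve_right (prod_ne_zero_iff.2 fun l hl => sub_ne_zero.2 ?_)
    exact hc.ne (ne_of_mem_erase hl).symm
  · exact fun k _ hkj => mul_eq_zero_of_right _ <|
      prod_eq_zero (mem_erase.2 ⟨Ne.symm hkj, mem_univ j⟩) (sub_self _)
  · exact fun hj => absurd (mem_univ j) hj

theorem eq_zero_of_sum_inv_sub_smul_eq_zero [Infinite 𝕜] {V : Type*} [AddCommGroup V]
    [Module 𝕜 V] (hc : Function.Injective c) {B : ι → V}
    (h : ∀ z, (∀ k, z ≠ c k) → ∑ k, (z - c k)⁻¹ • B k = 0) (j : ι) : B j = 0 := by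
  refine (Module.forall_dual_apply_eq_zero_iff 𝕜 (B j)).1 fun φ => ?_
  refine eq_zero_of_sum_inv_sub_mul_eq_zero (b := fun k => φ (B k)) hc (fun z hz => ?_) j
  simpa using congrArg φ (h z hz)

theorem sum_inv_sub_smul_eq_sum_iff [Infinite 𝕜] {V : Type*} [AddCommGroup V] [Module 𝕜 V]
    (hc : Function.Injective c) {B B' : ι → V} :
    (∀ z, (∀ k, z ≠ c k) → ∑ k, (z - c k)⁻¹ • B k = ∑ k, (z - c k)⁻¹ • B' k) ↔ B = B' := by
  refine ⟨fun h => funext fun j => sub_eq_zero.1 ?_, fun h _ _ => by rw [h]⟩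
  refine eq_zero_of_sum_inv_sub_smul_eq_zero (B := B - B') hc (fun z hz => ?_) j
  simp only [Pi.sub_apply, smul_sub, sum_sub_distrib, h z hz, sub_self]

end PartialFractions

section GarnierField

variable {𝕜 ι L : Type*} [Field 𝕜] [Fintype ι] [DecidableEq ι] [LieRing L] [LieAlgebra 𝕜 L]

/-- `garnierField c X i k` is the right-hand side of Garnier's system for `∂Aₖ/∂tᵢ` at `A = X`. -/
noncomputable def garnierField (c : ι → 𝕜) (X : ι → L) (i k : ι) : L :=
  if k = i then -∑ l ∈ univ.erase i, (c i - c l)⁻¹ • ⁅X i, X l⁆ else (c k - c i)⁻¹ • ⁅X k, X i⁆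

theorem garnierField_self (c : ι → 𝕜) (X : ι → L) (i : ι) :
    garnierField c X i i = -∑ l ∈ univ.erase i, (c i - c l)⁻¹ • ⁅X i, X l⁆ :=
  if_pos rfl

theorem garnierField_of_ne (c : ι → 𝕜) (X : ι → L) {i k : ι} (h : k ≠ i) :
    garnierField c X i k = (c k - c i)⁻¹ • ⁅X k, X i⁆ :=
  if_neg h

theorem garnierField_self_eq_neg_sum (c : ι → 𝕜) (X : ι → L) (i : ι) :
    garnierField c X i i = -∑ k ∈ univ.erase i, garnierField c X i k := by
  rw [garnierField_self]
  congr 1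
  refine sum_congr rfl fun k hk => ?_
  rw [garnierField_of_ne c X (ne_of_mem_erase hk), ← neg_sub, inv_neg, ← lie_skew,
    neg_smul_neg]

theorem lie_sum_inv_sub_smul {c : ι → 𝕜} (hc : Function.Injective c) (X : ι → L) (i : ι) {z : 𝕜}
    (hz : ∀ k, z ≠ c k) :
    ⁅∑ k, (z - c k)⁻¹ • X k, (z - c i)⁻¹ • X i⁆ = ∑ k, (z - c k)⁻¹ • garnierField c X i k := by
  have hsplit (k : ι) (hk : k ∈ univ.erase i) :
      ⁅(z - c k)⁻¹ • X k, (z - c i)⁻¹ • X i⁆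
        = (z - c k)⁻¹ • garnierField c X i k - (z - c i)⁻¹ • garnierField c X i k := by
    have hki := ne_of_mem_erase hk
    rw [smul_lie, lie_smul, smul_smul, inv_sub_mul_inv_sub (hc.ne hki) (hz k) (hz i),
      garnierField_of_ne c X hki, smul_smul, smul_smul, ← sub_smul, mul_comm, sub_mul]
  rw [sum_lie, ← add_sum_erase _ _ (mem_univ i), ← add_sum_erase _ _ (mem_univ i),
    garnierField_self_eq_neg_sum, lie_self, zero_add, sum_congr rfl hsplit, sum_sub_distrib,
    ← smul_sum, smul_neg]
  abel

theorem sum_inv_sub_smul_eq_lie_iff [Infinite 𝕜] {c : ι → 𝕜} (hc : Function.Injective c)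
    (D X : ι → L) (i : ι) :
    (∀ z, (∀ k, z ≠ c k) → ∑ k, (z - c k)⁻¹ • D k = ⁅∑ k, (z - c k)⁻¹ • X k, (z - c i)⁻¹ • X i⁆)
      ↔ ∀ k, D k = garnierField c X i k := by
  rw [← funext_iff, ← sum_inv_sub_smul_eq_sum_iff hc]
  exact forall₂_congr fun z hz => by rw [lie_sum_inv_sub_smul hc X i hz]

end GarnierField

theorem fderiv_sum_smul_apply {𝕜 ι E F : Type*} [NontriviallyNormedField 𝕜] [Fintype ι]
    [NormedAddCommGroup E] [NormedSpace 𝕜 E] [NormedAddCommGroup F] [NormedSpace 𝕜 F]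
    {f : ι → E → F} {t : E} (hf : ∀ k, DifferentiableAt 𝕜 (f k) t) (a : ι → 𝕜) (v : E) :
    fderiv 𝕜 (fun s => ∑ k, a k • f k s) t v = ∑ k, a k • fderiv 𝕜 (f k) t v := by
  rw [(HasFDerivAt.fun_sum (A := fun k s => a k • f k s) fun k _ =>
    (hf k).hasFDerivAt.const_smul (a k)).fderiv]
  simp

theorem garnier_iff_lax_general
    (r N : ℕ)
    (c : Fin N → ℂ) (hc : ∀ i j : Fin N, i ≠ j → c i ≠ c j)
    (U : Set (Fin N → ℂ)) (hUo : IsOpen U)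
    (A : Fin N → (Fin N → ℂ) → Matrix (Fin r) (Fin r) ℂ)
    (hA : ∀ i, DifferentiableOn ℂ (A i) U) :
    (∀ i : Fin N, ∀ t ∈ U, ∀ z : ℂ, (∀ k : Fin N, z ≠ c k) →
        fderiv ℂ (fun s => ∑ k, (z - c k)⁻¹ • A k s) t (Pi.single i 1)
          = ⁅∑ k, (z - c k)⁻¹ • A k t, (z - c i)⁻¹ • A i t⁆)
    ↔
    (∀ i j : Fin N, ∀ t ∈ U,
        (i ≠ j → fderiv ℂ (A i) t (Pi.single j 1)
            = (c i - c j)⁻¹ • ⁅A i t, A j t⁆) ∧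
        fderiv ℂ (A i) t (Pi.single i 1)
            = -∑ k ∈ Finset.univ.erase i, (c i - c k)⁻¹ • ⁅A i t, A k t⁆) := by
  -- Mathlib makes the commutator Lie ring of an associative ring only a local instance.
  let _ : LieRing (Matrix (Fin r) (Fin r) ℂ) := LieRing.ofAssociativeRing
  have hinj : Function.Injective c := Function.injective_iff_pairwise_ne.2 fun i j => hc i j
  have hdiff (t) (ht : t ∈ U) (k : Fin N) : DifferentiableAt ℂ (A k) t :=
    (hA k).differentiableAt (hUo.mem_nhds ht)
  calc _ ↔ ∀ i, ∀ t ∈ U, ∀ k, fderiv ℂ (A k) t (Pi.single i 1)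
        = garnierField c (fun l => A l t) i k := by
        refine forall_congr' fun i => forall₂_congr fun t ht => ?_
        refine Iff.trans ?_ (sum_inv_sub_smul_eq_lie_iff hinj _ _ i)
        exact forall₂_congr fun z _ =>
          Iff.of_eq (congrArg (· = _) (fderiv_sum_smul_apply (hdiff t ht) _ _))
    _ ↔ _ := by
        refine ⟨fun h i j t ht => ⟨fun hij => ?_, ?_⟩, fun h i t ht k => ?_⟩
        · rw [h j t ht i, garnierField_of_ne _ _ hij]
        · rw [h i t ht i, garnierField_self]
        · obtain rfl | hki := eq_or_ne k i
          · rw [(h k k t ht).2, garnierField_self]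
          · rw [(h k i t ht).1 hki, garnierField_of_ne _ _ hki]

/-- **Lax (isospectral) formulation of Garnier's autonomous system.**
For pairwise distinct constants `c₁,…,c_N` and holomorphic `A₁,…,A_N : U → Mₙ(ℂ)` on a
connected open `U ⊆ ℂ^N`, the Lax equation `∂M(λ,t)/∂t_i = [M(λ,t), A_i(t)/(λ−c_i)]`
(for all `i`, `t ∈ U`, `λ ∉ {c_1,…,c_N}`, with `M(λ,t) = Σ_i A_i(t)/(λ−c_i)`) holds iff the
`A_i` satisfy Garnier's autonomous system on `U`. -/
theorem garnier_iff_lax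
    (r N : ℕ) (hr : 1 ≤ r) (hN : 2 ≤ N)
    (c : Fin N → ℂ) (hc : ∀ i j : Fin N, i ≠ j → c i ≠ c j)
    (U : Set (Fin N → ℂ)) (hUo : IsOpen U) (hUc : IsConnected U)
    (A : Fin N → (Fin N → ℂ) → Matrix (Fin r) (Fin r) ℂ)
    (hA : ∀ i, DifferentiableOn ℂ (A i) U) :
    (∀ i : Fin N, ∀ t ∈ U, ∀ z : ℂ, (∀ k : Fin N, z ≠ c k) →
        fderiv ℂ (fun s => ∑ k, (z - c k)⁻¹ • A k s) t (Pi.single i 1)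
          = ⁅∑ k, (z - c k)⁻¹ • A k t, (z - c i)⁻¹ • A i t⁆)
    ↔
    (∀ i j : Fin N, ∀ t ∈ U,
        (i ≠ j → fderiv ℂ (A i) t (Pi.single j 1)
            = (c i - c j)⁻¹ • ⁅A i t, A j t⁆) ∧
        fderiv ℂ (A i) t (Pi.single i 1)
            = -∑ k ∈ Finset.univ.erase i, (c i - c k)⁻¹ • ⁅A i t, A k t⁆) :=
  garnier_iff_lax_general r N c hc U hUo A hA
end

section
/- Let r ≥ 1, N ≥ 2, and let A_1,…,A_N : U → M_r(ℂ) be holomorphic on a connected open set U ⊆ ℂ^N all of whose points have pairwise distinct coordinates, satisfying the Schlesinger equation. Then for every i, every t ∈ U, every λ ∈ ℂ \ {t_1,…,t_N} and every μ ∈ ℂ such that M(λ,t) − μ I is invertible, the characteristic polynomial of M varies according to ∂/∂t_i [det(M(λ,t) − μ I)] = det(M(λ,t) − μ I) · Tr( A_i(t) (λ − t_i)^{-2} (M(λ,t) − μ I)^{-1} ), where the t_i-derivative is taken with λ and μ held fixed. -/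
/-!
Under the Schlesinger equations the pencil `M(λ, t) = Σ_k A_k(t) / (λ - t_k)` satisfies the
isomonodromic Lax equation `∂_{t_i} M = ⁅M, A_i⁆ / (λ - t_i) + A_i / (λ - t_i)²`; the
commutator term comes from the partial fractions
`1/((λ-t_i)(t_i-t_k)) + 1/((λ-t_k)(t_k-t_i)) = 1/((λ-t_i)(λ-t_k))`.
By Jacobi's formula `∂ det B = tr (adj B · ∂B)` with `B = M - μ`, and the commutator contributes
nothing because `adj B` commutes with `B`, so `tr (adj B ⁅B, A_i⁆) = 0`. What remains is
`tr (adj B · A_i / (λ - t_i)²) = det B · tr (A_i / (λ - t_i)² · B⁻¹)`.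
-/

open Matrix Finset

attribute [local instance] Matrix.normedAddCommGroup Matrix.normedSpace

section PartialFractions

variable {ι K L : Type*} [Fintype ι] [DecidableEq ι] [Field K] [LieRing L] [LieAlgebra K L]

theorem sum_inv_sub_smul_eq_lie_of_schlesinger {a X : ι → L} {t : ι → K} {z : K} {i : ι}
    (ht : ∀ k, k ≠ i → t k ≠ t i) (hz : ∀ k, z ≠ t k)
    (hX : ∀ k, k ≠ i → X k = (t k - t i)⁻¹ • ⁅a k, a i⁆)
    (hXi : X i = -∑ k ∈ univ.erase i, (t i - t k)⁻¹ • ⁅a i, a k⁆) :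
    ∑ k, (z - t k)⁻¹ • X k = (z - t i)⁻¹ • ⁅∑ k, (z - t k)⁻¹ • a k, a i⁆ := by
  have partial_fractions (k : ι) (hk : k ≠ i) :
      (z - t i)⁻¹ * (t i - t k)⁻¹ + (z - t k)⁻¹ * (t k - t i)⁻¹
        = (z - t i)⁻¹ * (z - t k)⁻¹ := by
    have := sub_ne_zero.2 (hz k)
    have := sub_ne_zero.2 (hz i)
    have := sub_ne_zero.2 (ht k hk)
    have := sub_ne_zero.2 (ht k hk).symm
    field_simp
    ring
  simp only [sum_lie, smul_lie, Finset.smul_sum]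
  rw [← Finset.add_sum_erase _ _ (mem_univ i),
    ← Finset.add_sum_erase _ _ (mem_univ i), lie_self, smul_zero, smul_zero, zero_add, hXi,
    smul_neg, Finset.smul_sum, ← Finset.sum_neg_distrib, ← Finset.sum_add_distrib]
  refine Finset.sum_congr rfl fun k hk => ?_
  have hki := Finset.ne_of_mem_erase hk
  rw [hX k hki, ← lie_skew (a i)]
  match_scalars
  linear_combination partial_fractions k hki

end PartialFractions

namespace Matrix

variable {n R 𝕜 : Type*} [Fintype n] [DecidableEq n]

section CommRing

variable [CommRing R]

theorem sum_det_updateRow_eq_trace_adjugate_mul (B H : Matrix n n R) :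
    ∑ i, (B.updateRow i (H i)).det = trace (B.adjugate * H) := by
  have hrow (i : n) : (B.updateRow i (H i)).det = ∑ j, H i j * B.adjugate j i := by
    rw [det_eq_sum_mul_adjugate_row _ i]
    refine Finset.sum_congr rfl fun j _ => ?_
    rw [updateRow_self, adjugate_apply, adjugate_apply, updateRow_idem]
  simp_rw [hrow, trace, diag, mul_apply]
  rw [Finset.sum_comm]
  exact Finset.sum_congr rfl fun j _ => Finset.sum_congr rfl fun i _ => mul_comm _ _

theorem trace_adjugate_mul_lie_self (B X : Matrix n n R) :
    trace (B.adjugate * ⁅B, X⁆) = 0 := by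
  rw [Ring.lie_def, mul_sub, trace_sub, ← mul_assoc, adjugate_mul, ← mul_assoc,
    trace_mul_cycle, mul_adjugate, sub_self]

theorem adjugate_eq_det_smul_inv {B : Matrix n n R} (h : IsUnit B.det) :
    B.adjugate = B.det • B⁻¹ := by
  rw [inv_def, smul_smul, Ring.mul_inverse_cancel _ h, one_smul]

theorem lie_sub_smul_one (B X : Matrix n n R) (c : R) : ⁅B - c • 1, X⁆ = ⁅B, X⁆ := by
  rw [Ring.lie_def, Ring.lie_def, sub_mul, mul_sub, smul_mul_assoc, mul_smul_comm, one_mul,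
    mul_one]
  abel

theorem trace_adjugate_mul_eq_det_mul_trace_mul_inv {B : Matrix n n R} (h : IsUnit B.det)
    (X : Matrix n n R) : trace (B.adjugate * X) = B.det * trace (X * B⁻¹) := by
  rw [adjugate_eq_det_smul_inv h, smul_mul_assoc, trace_smul, trace_mul_comm, smul_eq_mul]

end CommRing

section Jacobi

variable [NontriviallyNormedField 𝕜]

def detContinuousMultilinearMap : ContinuousMultilinearMap 𝕜 (fun _ : n => n → 𝕜) 𝕜 where
  toMultilinearMap := (detRowAlternating (R := 𝕜) (n := n)).toMultilinearMap
  cont := continuous_id.matrix_det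

theorem hasFDerivAt_det (B : Matrix n n 𝕜) :
    HasFDerivAt (fun X : Matrix n n 𝕜 => X.det) (detContinuousMultilinearMap.linearDeriv B) B :=
  (detContinuousMultilinearMap (𝕜 := 𝕜) (n := n)).hasFDerivAt B

/-- Jacobi's formula. -/
theorem fderiv_det_apply {E : Type*} [NormedAddCommGroup E] [NormedSpace 𝕜 E]
    {f : E → Matrix n n 𝕜} {x : E} (hf : DifferentiableAt 𝕜 f x) (v : E) :
    fderiv 𝕜 (fun s => (f s).det) x v = trace ((f x).adjugate * fderiv 𝕜 f x v) := by
  have h : HasFDerivAt (fun s => (f s).det) _ x := (hasFDerivAt_det (f x)).comp x hf.hasFDerivAt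
  rw [h.fderiv]
  exact (ContinuousMultilinearMap.linearDeriv_apply _ _ _).trans
    (sum_det_updateRow_eq_trace_adjugate_mul _ _)

end Jacobi

end Matrix

section Schlesinger

variable {ι 𝕜 : Type*} [Fintype ι] [NontriviallyNormedField 𝕜]

theorem hasFDerivAt_inv_sub_apply {z : 𝕜} {t : ι → 𝕜} {k : ι} (hz : z ≠ t k) :
    HasFDerivAt (fun s : ι → 𝕜 => (z - s k)⁻¹)
      (((z - t k) ^ 2)⁻¹ • ContinuousLinearMap.proj (R := 𝕜) (φ := fun _ : ι => 𝕜) k) t := by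
  have h := (hasDerivAt_inv (sub_ne_zero.2 hz)).comp_hasFDerivAt t
    ((hasFDerivAt_apply (𝕜 := 𝕜) k t).const_sub z)
  exact h.congr_fderiv (by rw [smul_neg, neg_smul, neg_neg])

variable {F : Type*} [NormedAddCommGroup F] [NormedSpace 𝕜 F]

theorem hasFDerivAt_sum_inv_sub_smul {A : ι → (ι → 𝕜) → F} {z : 𝕜} {t : ι → 𝕜}
    (hA : ∀ k, DifferentiableAt 𝕜 (A k) t) (hz : ∀ k, z ≠ t k) :
    HasFDerivAt (fun s => ∑ k, (z - s k)⁻¹ • A k s)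
      (∑ k, ((z - t k)⁻¹ • fderiv 𝕜 (A k) t +
        (((z - t k) ^ 2)⁻¹ • ContinuousLinearMap.proj (R := 𝕜) (φ := fun _ : ι => 𝕜) k).smulRight
          (A k t))) t :=
  HasFDerivAt.fun_sum fun k _ => (hasFDerivAt_inv_sub_apply (hz k)).smul (hA k).hasFDerivAt

variable [DecidableEq ι]

theorem fderiv_sum_inv_sub_smul_single {A : ι → (ι → 𝕜) → F} {z : 𝕜} {t : ι → 𝕜}
    (hA : ∀ k, DifferentiableAt 𝕜 (A k) t) (hz : ∀ k, z ≠ t k) (i : ι) :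
    fderiv 𝕜 (fun s => ∑ k, (z - s k)⁻¹ • A k s) t (Pi.single i 1)
      = ∑ k, (z - t k)⁻¹ • fderiv 𝕜 (A k) t (Pi.single i 1) + ((z - t i) ^ 2)⁻¹ • A i t := by
  simp [(hasFDerivAt_sum_inv_sub_smul hA hz).fderiv, Finset.sum_add_distrib, Pi.single_apply]

theorem schlesinger_lax_equation {n : Type*} [Fintype n] [DecidableEq n]
    {A : ι → (ι → 𝕜) → Matrix n n 𝕜} {z : 𝕜} {t : ι → 𝕜} {i : ι}
    (hA : ∀ k, DifferentiableAt 𝕜 (A k) t) (ht : ∀ k, k ≠ i → t k ≠ t i) (hz : ∀ k, z ≠ t k)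
    (hX : ∀ k, k ≠ i → fderiv 𝕜 (A k) t (Pi.single i 1) = (t k - t i)⁻¹ • ⁅A k t, A i t⁆)
    (hXi : fderiv 𝕜 (A i) t (Pi.single i 1)
      = -∑ k ∈ univ.erase i, (t i - t k)⁻¹ • ⁅A i t, A k t⁆) (μ : 𝕜) :
    fderiv 𝕜 (fun s => ∑ k, (z - s k)⁻¹ • A k s - μ • (1 : Matrix n n 𝕜)) t (Pi.single i 1)
      = (z - t i)⁻¹ • ⁅∑ k, (z - t k)⁻¹ • A k t - μ • 1, A i t⁆ + ((z - t i) ^ 2)⁻¹ • A i t := by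
  have hsub : fderiv 𝕜 (fun s => ∑ k, (z - s k)⁻¹ • A k s - μ • (1 : Matrix n n 𝕜)) t
      = fderiv 𝕜 (fun s => ∑ k, (z - s k)⁻¹ • A k s) t :=
    fderiv_sub_const _
  have hderiv : fderiv 𝕜 (fun s => ∑ k, (z - s k)⁻¹ • A k s) t (Pi.single i 1)
      = ∑ k, (z - t k)⁻¹ • fderiv 𝕜 (A k) t (Pi.single i 1) + ((z - t i) ^ 2)⁻¹ • A i t :=
    fderiv_sum_inv_sub_smul_single hA hz i
  have hcomm : ∑ k, (z - t k)⁻¹ • fderiv 𝕜 (A k) t (Pi.single i 1)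
      = (z - t i)⁻¹ • ⁅∑ k, (z - t k)⁻¹ • A k t, A i t⁆ := by
    -- matrices get their commutator Lie ring only through this (non-instance) definition
    let := LieRing.ofAssociativeRing (A := Matrix n n 𝕜)
    exact sum_inv_sub_smul_eq_lie_of_schlesinger (a := fun k => A k t)
      (X := fun k => fderiv 𝕜 (A k) t (Pi.single i 1)) ht hz hX hXi
  rw [hsub, hderiv, hcomm, Matrix.lie_sub_smul_one]

end Schlesinger

theorem schlesinger_charpoly_variation_general
    (r N : ℕ)
    (U : Set (Fin N → ℂ)) (hUo : IsOpen U)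
    (hUd : ∀ t ∈ U, ∀ i j : Fin N, i ≠ j → t i ≠ t j)
    (A : Fin N → (Fin N → ℂ) → Matrix (Fin r) (Fin r) ℂ)
    (hA : ∀ i, DifferentiableOn ℂ (A i) U)
    (hSch : ∀ i j : Fin N, ∀ t ∈ U,
        (i ≠ j → fderiv ℂ (A i) t (Pi.single j 1)
            = (t i - t j)⁻¹ • ⁅A i t, A j t⁆) ∧
        fderiv ℂ (A i) t (Pi.single i 1)
            = -∑ k ∈ Finset.univ.erase i, (t i - t k)⁻¹ • ⁅A i t, A k t⁆) :
    ∀ i : Fin N, ∀ t ∈ U, ∀ z : ℂ, (∀ k : Fin N, z ≠ t k) → ∀ μ : ℂ,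
      IsUnit (∑ k, (z - t k)⁻¹ • A k t - μ • (1 : Matrix (Fin r) (Fin r) ℂ)) →
      fderiv ℂ
          (fun s => (∑ k, (z - s k)⁻¹ • A k s - μ • (1 : Matrix (Fin r) (Fin r) ℂ)).det)
          t (Pi.single i 1)
        = (∑ k, (z - t k)⁻¹ • A k t - μ • (1 : Matrix (Fin r) (Fin r) ℂ)).det *
          Matrix.trace ((((z - t i) ^ 2)⁻¹ • A i t) *
            (∑ k, (z - t k)⁻¹ • A k t - μ • (1 : Matrix (Fin r) (Fin r) ℂ))⁻¹) := by
  intro i t ht z hz μ hB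
  have hAt (k : Fin N) : DifferentiableAt ℂ (A k) t := (hA k).differentiableAt (hUo.mem_nhds ht)
  have hdiff : DifferentiableAt ℂ
      (fun s => ∑ k, (z - s k)⁻¹ • A k s - μ • (1 : Matrix (Fin r) (Fin r) ℂ)) t :=
    (hasFDerivAt_sum_inv_sub_smul hAt hz).differentiableAt.sub_const _
  rw [fderiv_det_apply hdiff, schlesinger_lax_equation hAt (fun k hk => hUd t ht k i hk) hz
      (fun k hk => (hSch k i t ht).1 hk) (hSch i i t ht).2 μ,
    mul_add, trace_add, mul_smul_comm, trace_smul, trace_adjugate_mul_lie_self, smul_zero,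
    zero_add, trace_adjugate_mul_eq_det_mul_trace_mul_inv ((isUnit_iff_isUnit_det _).mp hB)]

/-- **Variation of the characteristic polynomial under isomonodromic deformation.**
If holomorphic `A₁,…,A_N : U → Mₙ(ℂ)` satisfy the Schlesinger equation on a connected open
set `U ⊆ ℂ^N` whose points have pairwise distinct coordinates, then, with
`M(λ,t) = Σ_k A_k(t)/(λ−t_k)`, for every `i`, `t ∈ U`, `λ ∉ {t_1,…,t_N}` and `μ ∈ ℂ` such
that `M(λ,t) − μI` is invertible:
`∂/∂t_i det(M−μI) = det(M−μI) · Tr(A_i (λ−t_i)⁻² (M−μI)⁻¹)`. -/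
theorem schlesinger_charpoly_variation
    (r N : ℕ) (hr : 1 ≤ r) (hN : 2 ≤ N)
    (U : Set (Fin N → ℂ)) (hUo : IsOpen U) (hUc : IsConnected U)
    (hUd : ∀ t ∈ U, ∀ i j : Fin N, i ≠ j → t i ≠ t j)
    (A : Fin N → (Fin N → ℂ) → Matrix (Fin r) (Fin r) ℂ)
    (hA : ∀ i, DifferentiableOn ℂ (A i) U)
    (hSch : ∀ i j : Fin N, ∀ t ∈ U,
        (i ≠ j → fderiv ℂ (A i) t (Pi.single j 1)
            = (t i - t j)⁻¹ • ⁅A i t, A j t⁆) ∧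
        fderiv ℂ (A i) t (Pi.single i 1)
            = -∑ k ∈ Finset.univ.erase i, (t i - t k)⁻¹ • ⁅A i t, A k t⁆) :
    ∀ i : Fin N, ∀ t ∈ U, ∀ z : ℂ, (∀ k : Fin N, z ≠ t k) → ∀ μ : ℂ,
      IsUnit (∑ k, (z - t k)⁻¹ • A k t - μ • (1 : Matrix (Fin r) (Fin r) ℂ)) →
      fderiv ℂ
          (fun s => (∑ k, (z - s k)⁻¹ • A k s - μ • (1 : Matrix (Fin r) (Fin r) ℂ)).det)
          t (Pi.single i 1)
        = (∑ k, (z - t k)⁻¹ • A k t - μ • (1 : Matrix (Fin r) (Fin r) ℂ)).det *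
          Matrix.trace ((((z - t i) ^ 2)⁻¹ • A i t) *
            (∑ k, (z - t k)⁻¹ • A k t - μ • (1 : Matrix (Fin r) (Fin r) ℂ))⁻¹) :=
  schlesinger_charpoly_variation_general r N U hUo hUd A hA hSch
end
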